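/- (Appendix A, general sensing FIM identity with phase cross-terms, equation (61).) With the blocks of I_η as specified (now allowing constant-in-κ cross blocks between delays/amplitudes and phases), the matrix product J_sᵀ · I_η · J_s equals the 3×3 block matrix, with rows and columns each indexed by (Fin L) ⊕ (Fin L) ⊕ (Fin L), whose blocks are: (1,1) = Hᵀ·Λττ·H, (1,2) = 𝔞·Hᵀ·Λτφ·H, (1,3) = Hᵀ·Λτα; (2,1) = 𝔞·Hᵀ·Λφτ·H, (2,2) = 𝔟·Hᵀ·Λφφ·H, (2,3) = 𝔞·Hᵀ·Λφα; (3,1) = Λατ·H, (3,2) = 𝔞·Λαφ·H, (3,3) = Λαα; where 𝔞 = Σ_{κ=0}^{N_f−1} 2πκT_f = π·T_f·N_f·(N_f−1) and 𝔟 = Σ_{κ=0}^{N_f−1} (2πκT_f)² = 2π²·T_f²·N_f·(N_f−1)·(2N_f−1)/3. -/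
import Mathlib


open Matrix

noncomputable section

/-- The matrix `H`: first column all ones, agreeing with the identity elsewhere. -/
def Hmat (L : ℕ) : Matrix (Fin L) (Fin L) ℂ :=
  Matrix.of fun i j => if j.val = 0 ∨ i = j then 1 else 0

/-- The FIM of the observation vector in the general sensing case, with constant-in-`κ`
cross blocks between the delay/amplitude groups and the phase groups. -/
def IetaG (L Nf : ℕ)
    (Λττ Λτφ Λφτ Λτα Λατ Λφφ Λφα Λαφ Λαα : Matrix (Fin L) (Fin L) ℂ) :
    Matrix (Fin L ⊕ (Fin Nf × Fin L) ⊕ Fin L) (Fin L ⊕ (Fin Nf × Fin L) ⊕ Fin L) ℂ :=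
  Matrix.of fun i j =>
    match i, j with
    | Sum.inl a, Sum.inl b => Λττ a b
    | Sum.inl a, Sum.inr (Sum.inl (_, b)) => Λτφ a b
    | Sum.inl a, Sum.inr (Sum.inr b) => Λτα a b
    | Sum.inr (Sum.inl (_, a)), Sum.inl b => Λφτ a b
    | Sum.inr (Sum.inl (κ, a)), Sum.inr (Sum.inl (κ', b)) => if κ = κ' then Λφφ a b else 0
    | Sum.inr (Sum.inl (_, a)), Sum.inr (Sum.inr b) => Λφα a b
    | Sum.inr (Sum.inr a), Sum.inl b => Λατ a b
    | Sum.inr (Sum.inr a), Sum.inr (Sum.inl (_, b)) => Λαφ a b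
    | Sum.inr (Sum.inr a), Sum.inr (Sum.inr b) => Λαα a b

/-- The Jacobian matrix of the sensing case: block diagonal with blocks `H`, `L_N`, `I_L`,
where the `κ`-th block of `L_N` is `(2πκT_f)·H`. -/
def Js (L Nf : ℕ) (Tf : ℝ) :
    Matrix (Fin L ⊕ (Fin Nf × Fin L) ⊕ Fin L) (Fin L ⊕ Fin L ⊕ Fin L) ℂ :=
  Matrix.of fun i j =>
    match i, j with
    | Sum.inl a, Sum.inl b => Hmat L a b
    | Sum.inr (Sum.inl (κ, a)), Sum.inr (Sum.inl b) =>
        ((2 * Real.pi * (κ.1 : ℝ) * Tf : ℝ) : ℂ) * Hmat L a b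
    | Sum.inr (Sum.inr a), Sum.inr (Sum.inr b) => (1 : Matrix (Fin L) (Fin L) ℂ) a b
    | _, _ => 0

/-- Gauss sum in `ℝ`. -/
lemma sumR (n : ℕ) : ∑ i ∈ Finset.range n, (i : ℝ) = n * (n - 1) / 2 := by
  induction n with
  | zero => simp
  | succ k ih => rw [Finset.sum_range_succ, ih]; push_cast; ring

/-- Sum of squares in `ℝ`. -/
lemma sumRsq (n : ℕ) : ∑ i ∈ Finset.range n, (i : ℝ) ^ 2 = n * (n - 1) * (2 * n - 1) / 6 := by
  induction n with
  | zero => simp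
  | succ k ih => rw [Finset.sum_range_succ, ih]; push_cast; ring

lemma sumA (Nf : ℕ) (Tf : ℝ) :
    ∑ κ : Fin Nf, (2 * (Real.pi : ℂ) * ((κ : ℕ) : ℂ) * (Tf : ℂ)) =
      ((Real.pi * Tf * (Nf : ℝ) * ((Nf : ℝ) - 1) : ℝ) : ℂ) := by
  have h1 : ∑ κ : Fin Nf, (2 * (Real.pi : ℂ) * ((κ : ℕ) : ℂ) * (Tf : ℂ)) =
      ∑ i ∈ Finset.range Nf, (2 * (Real.pi : ℂ) * (i : ℂ) * (Tf : ℂ)) :=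
    Fin.sum_univ_eq_sum_range (fun i => 2 * (Real.pi : ℂ) * (i : ℂ) * (Tf : ℂ)) Nf
  have h2 : ∑ i ∈ Finset.range Nf, (2 * Real.pi * (i : ℝ) * Tf) =
      Real.pi * Tf * (Nf : ℝ) * ((Nf : ℝ) - 1) := by
    have : ∑ i ∈ Finset.range Nf, (2 * Real.pi * (i : ℝ) * Tf) =
        (2 * Real.pi * Tf) * ∑ i ∈ Finset.range Nf, (i : ℝ) := by
      rw [Finset.mul_sum]; exact Finset.sum_congr rfl fun i _ => by ring
    rw [this, sumR]; ring
  rw [h1, ← h2]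
  push_cast
  rfl

lemma sumB (Nf : ℕ) (Tf : ℝ) :
    ∑ κ : Fin Nf, (2 * (Real.pi : ℂ) * ((κ : ℕ) : ℂ) * (Tf : ℂ)) ^ 2 =
      ((2 * Real.pi ^ 2 * Tf ^ 2 * (Nf : ℝ) * ((Nf : ℝ) - 1) * (2 * (Nf : ℝ) - 1) / 3 : ℝ) : ℂ) := by
  have h1 : ∑ κ : Fin Nf, (2 * (Real.pi : ℂ) * ((κ : ℕ) : ℂ) * (Tf : ℂ)) ^ 2 =
      ∑ i ∈ Finset.range Nf, (2 * (Real.pi : ℂ) * (i : ℂ) * (Tf : ℂ)) ^ 2 :=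
    Fin.sum_univ_eq_sum_range (fun i => (2 * (Real.pi : ℂ) * (i : ℂ) * (Tf : ℂ)) ^ 2) Nf
  have h2 : ∑ i ∈ Finset.range Nf, (2 * Real.pi * (i : ℝ) * Tf) ^ 2 =
      2 * Real.pi ^ 2 * Tf ^ 2 * (Nf : ℝ) * ((Nf : ℝ) - 1) * (2 * (Nf : ℝ) - 1) / 3 := by
    have : ∑ i ∈ Finset.range Nf, (2 * Real.pi * (i : ℝ) * Tf) ^ 2 =
        (4 * Real.pi ^ 2 * Tf ^ 2) * ∑ i ∈ Finset.range Nf, (i : ℝ) ^ 2 := by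
      rw [Finset.mul_sum]; exact Finset.sum_congr rfl fun i _ => by ring
    rw [this, sumRsq]; ring
  rw [h1, ← h2]
  push_cast
  rfl

lemma sumA' (Nf : ℕ) (Tf : ℝ) :
    ∑ κ : Fin Nf, (2 * (Real.pi : ℂ) * ((κ : ℕ) : ℂ) * (Tf : ℂ)) =
      (Real.pi : ℂ) * (Tf : ℂ) * (Nf : ℂ) * ((Nf : ℂ) - 1) := by
  rw [sumA]; push_cast; ring

lemma sumB' (Nf : ℕ) (Tf : ℝ) :
    ∑ κ : Fin Nf, (2 * (Real.pi : ℂ) * ((κ : ℕ) : ℂ) * (Tf : ℂ)) ^ 2 =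
      2 * (Real.pi : ℂ) ^ 2 * (Tf : ℂ) ^ 2 * (Nf : ℂ) * ((Nf : ℂ) - 1) *
        (2 * (Nf : ℂ) - 1) / 3 := by
  rw [sumB]; push_cast; ring

/-- Appendix A, equation (61): the general sensing FIM identity with phase cross-terms, with
`𝔞 = π·T_f·N_f·(N_f−1)` and `𝔟 = 2π²·T_f²·N_f·(N_f−1)·(2N_f−1)/3`. -/
theorem fim_sensing_general (L Nf : ℕ) (hL : 1 ≤ L) (Tf : ℝ)
    (Λττ Λτφ Λφτ Λτα Λατ Λφφ Λφα Λαφ Λαα : Matrix (Fin L) (Fin L) ℂ) :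
    (Js L Nf Tf)ᵀ * IetaG L Nf Λττ Λτφ Λφτ Λτα Λατ Λφφ Λφα Λαφ Λαα * Js L Nf Tf =
      Matrix.of (fun (i j : Fin L ⊕ Fin L ⊕ Fin L) =>
        match i, j with
        | Sum.inl a, Sum.inl b => ((Hmat L)ᵀ * Λττ * Hmat L) a b
        | Sum.inl a, Sum.inr (Sum.inl b) =>
            ((Real.pi * Tf * (Nf : ℝ) * ((Nf : ℝ) - 1) : ℝ) : ℂ) *
              ((Hmat L)ᵀ * Λτφ * Hmat L) a b
        | Sum.inl a, Sum.inr (Sum.inr b) => ((Hmat L)ᵀ * Λτα) a b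
        | Sum.inr (Sum.inl a), Sum.inl b =>
            ((Real.pi * Tf * (Nf : ℝ) * ((Nf : ℝ) - 1) : ℝ) : ℂ) *
              ((Hmat L)ᵀ * Λφτ * Hmat L) a b
        | Sum.inr (Sum.inl a), Sum.inr (Sum.inl b) =>
            ((2 * Real.pi ^ 2 * Tf ^ 2 * (Nf : ℝ) * ((Nf : ℝ) - 1) * (2 * (Nf : ℝ) - 1) / 3 : ℝ) : ℂ) *
              ((Hmat L)ᵀ * Λφφ * Hmat L) a b
        | Sum.inr (Sum.inl a), Sum.inr (Sum.inr b) =>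
            ((Real.pi * Tf * (Nf : ℝ) * ((Nf : ℝ) - 1) : ℝ) : ℂ) *
              ((Hmat L)ᵀ * Λφα) a b
        | Sum.inr (Sum.inr a), Sum.inl b => (Λατ * Hmat L) a b
        | Sum.inr (Sum.inr a), Sum.inr (Sum.inl b) =>
            ((Real.pi * Tf * (Nf : ℝ) * ((Nf : ℝ) - 1) : ℝ) : ℂ) *
              (Λαφ * Hmat L) a b
        | Sum.inr (Sum.inr a), Sum.inr (Sum.inr b) => Λαα a b) := by
  ext i j
  obtain (a | a | a) := i <;> obtain (b | b | b) := j <;>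
    simp only [Matrix.of_apply] <;>
    simp [Matrix.mul_apply, Js, IetaG, Fintype.sum_sum_type, Fintype.sum_prod_type,
      Finset.mul_sum, Finset.sum_mul, Matrix.one_apply]
  · -- τφ
    have e1 : ∀ (κ : Fin Nf) (x y : Fin L), Hmat L y a * Λτφ y x *
        (2 * (Real.pi : ℂ) * ((κ : ℕ) : ℂ) * (Tf : ℂ) * Hmat L x b) =
        (2 * (Real.pi : ℂ) * ((κ : ℕ) : ℂ) * (Tf : ℂ)) * (Hmat L y a * Λτφ y x * Hmat L x b) :=
      fun _ _ _ => by ring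
    simp_rw [e1, ← Finset.mul_sum]
    rw [← Finset.sum_mul, sumA']
  · -- φτ
    rw [Finset.sum_comm]
    have e1 : ∀ (κ : Fin Nf) (x y : Fin L),
        2 * (Real.pi : ℂ) * ((κ : ℕ) : ℂ) * (Tf : ℂ) * Hmat L y a * Λφτ y x * Hmat L x b =
        (2 * (Real.pi : ℂ) * ((κ : ℕ) : ℂ) * (Tf : ℂ)) * (Hmat L y a * Λφτ y x * Hmat L x b) :=
      fun _ _ _ => by ring
    simp_rw [e1, ← Finset.mul_sum]
    rw [← Finset.sum_mul, sumA']
  · -- φφ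
    have e1 : ∀ (κ : Fin Nf) (x y : Fin L),
        2 * (Real.pi : ℂ) * ((κ : ℕ) : ℂ) * (Tf : ℂ) * Hmat L y a * Λφφ y x *
          (2 * (Real.pi : ℂ) * ((κ : ℕ) : ℂ) * (Tf : ℂ) * Hmat L x b) =
        (2 * (Real.pi : ℂ) * ((κ : ℕ) : ℂ) * (Tf : ℂ)) ^ 2 *
          (Hmat L y a * Λφφ y x * Hmat L x b) :=
      fun _ _ _ => by ring
    simp_rw [e1, ← Finset.mul_sum]
    rw [← Finset.sum_mul, sumB']
  · -- φα
    have e1 : ∀ (κ : Fin Nf) (x : Fin L),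
        2 * (Real.pi : ℂ) * ((κ : ℕ) : ℂ) * (Tf : ℂ) * Hmat L x a * Λφα x b =
        (2 * (Real.pi : ℂ) * ((κ : ℕ) : ℂ) * (Tf : ℂ)) * (Hmat L x a * Λφα x b) :=
      fun _ _ => by ring
    simp_rw [e1, ← Finset.mul_sum]
    rw [← Finset.sum_mul, sumA']
  · -- αφ
    have e1 : ∀ (κ : Fin Nf) (x : Fin L),
        Λαφ a x * (2 * (Real.pi : ℂ) * ((κ : ℕ) : ℂ) * (Tf : ℂ) * Hmat L x b) =
        (2 * (Real.pi : ℂ) * ((κ : ℕ) : ℂ) * (Tf : ℂ)) * (Λαφ a x * Hmat L x b) :=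
      fun _ _ => by ring
    simp_rw [e1, ← Finset.mul_sum]
    rw [← Finset.sum_mul, sumA']
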